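/- Under the hypotheses of the existence theorem for discrete gradient methods (conditions on f̃, ī, ĩ, î, ĭ with constants R, L, H on a bounded set B; R' := max{R, 10L}; H' := min{H, 1/(10L), 1/(6C₂R'), 1/((36C₂+6)L)}), for each x ∈ B with i(x) ≠ 0, each h ∈ [0,H') and all z, z' ∈ B_{R'}(x), the map T(z) := x + h S̃(x,z,h) ī(x,z), with S̃(x,z,h) := (f̃(x,z,h) ĩ(x,z,h)ᵀ − ĩ(x,z,h) f̃(x,z,h)ᵀ)/(î(x,z,h)·ĭ(x,z,h)), satisfies the contraction estimate |T(z) − T(z')| ≤ (36 C₂ + 6) L h |z − z'|, and (36 C₂ + 6) L h < 1. -/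

import Mathlib

open scoped RealInnerProductSpace

noncomputable section

/-- Membership in the ball `B_R(x) = {z : ‖z − x‖ ≤ ‖i x‖ / R}`. -/
def InBall {d : ℕ} (i : EuclideanSpace ℝ (Fin d) → EuclideanSpace ℝ (Fin d)) (R : ℝ)
    (x z : EuclideanSpace ℝ (Fin d)) : Prop :=
  ‖z - x‖ ≤ ‖i x‖ / R

/-- The consistency and local Lipschitz conditions at the point `x` for an approximation
`g(·,·,·)` of `target` (conditions (11z)/(12z) of the paper, with balls measured via `i`). -/
def ConsistAt {d : ℕ} (i target : EuclideanSpace ℝ (Fin d) → EuclideanSpace ℝ (Fin d))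
    (x : EuclideanSpace ℝ (Fin d)) (R L H : ℝ)
    (g : EuclideanSpace ℝ (Fin d) → EuclideanSpace ℝ (Fin d) → ℝ → EuclideanSpace ℝ (Fin d)) :
    Prop :=
  g x x 0 = target x ∧
    ∀ h : ℝ, 0 ≤ h → h < H →
      (∀ u v w, InBall i R x u → InBall i R x v → InBall i R x w →
        ‖g u v h - g w v h‖ ≤ L * ‖u - w‖ ∧ ‖g u v h - g u w h‖ ≤ L * ‖v - w‖) ∧
      ‖g x x h - g x x 0‖ ≤ L * h * ‖i x‖

/-- The discrete gradient step equation `x' = x + h S̃(x,x',h) ī(x,x')`, where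
`S̃ = (f̃ ĩᵀ − ĩ f̃ᵀ)/(î·ĭ)`, so that
`S̃ ī = ((ĩ·ī) f̃ − (f̃·ī) ĩ)/(î·ĭ)`. -/
def DGEq {d : ℕ}
    (ftil itil ihat ibrev :
      EuclideanSpace ℝ (Fin d) → EuclideanSpace ℝ (Fin d) → ℝ → EuclideanSpace ℝ (Fin d))
    (ibar : EuclideanSpace ℝ (Fin d) → EuclideanSpace ℝ (Fin d) → EuclideanSpace ℝ (Fin d))
    (x : EuclideanSpace ℝ (Fin d)) (h : ℝ) (x' : EuclideanSpace ℝ (Fin d)) : Prop :=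
  x' = x + (h / ⟪ihat x x' h, ibrev x x' h⟫) •
    (⟪itil x x' h, ibar x x'⟫ • ftil x x' h - ⟪ftil x x' h, ibar x x'⟫ • itil x x' h)

/-- The map `T(z) := x + h S̃(x,z,h) ī(x,z)` of the contraction argument. -/
def Tmap {d : ℕ}
    (ftil itil ihat ibrev :
      EuclideanSpace ℝ (Fin d) → EuclideanSpace ℝ (Fin d) → ℝ → EuclideanSpace ℝ (Fin d))
    (ibar : EuclideanSpace ℝ (Fin d) → EuclideanSpace ℝ (Fin d) → EuclideanSpace ℝ (Fin d))
    (x z : EuclideanSpace ℝ (Fin d)) (h : ℝ) : EuclideanSpace ℝ (Fin d) :=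
  x + (h / ⟪ihat x z h, ibrev x z h⟫) •
    (⟪itil x z h, ibar x z⟫ • ftil x z h - ⟪ftil x z h, ibar x z⟫ • itil x z h)

/-!
Write `T z - x = h • D(z)⁻¹ • N(z)` with `D(z) = ⟪î, ĭ⟫` and `N(z) = (f̃ ĩᵀ - ĩ f̃ᵀ) ī`, which is
trilinear in `(f̃, ĩ, ī)`. On `B_{R'}(x)` and for `10 L h ≤ 1`, each of `ĩ, î, ĭ, ī` stays within
`‖i x‖ / 5` of `i x` and `‖f̃‖ ≤ C₂ ‖i x‖`, while all five are `L`-Lipschitz in `z`. Hence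
`D ≥ (14/25) ‖i x‖²`, and trilinearity together with the quotient rule make `z ↦ D⁻¹ • N`
Lipschitz with constant `(1500/49 C₂ + 36/7) L ≤ (36 C₂ + 6) L`.
-/

theorem norm_inv_smul_sub_inv_smul_le {F : Type*} [NormedAddCommGroup F] [NormedSpace ℝ F]
    {m D D' : ℝ} (hm : 0 < m) (hD : m ≤ D) (hD' : m ≤ D') (N N' : F) :
    ‖D⁻¹ • N - D'⁻¹ • N'‖ ≤ (‖N - N'‖ + |D - D'| / m * ‖N'‖) / m := by
  have hD0 : 0 < D := hm.trans_le hD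
  have hD'0 : 0 < D' := hm.trans_le hD'
  have split : D⁻¹ • N - D'⁻¹ • N' = D⁻¹ • (N - N') + ((D' - D) / (D * D')) • N' := by
    rw [smul_sub, sub_add, ← sub_smul]
    congr 2
    field_simp
    ring
  rw [split]
  refine (norm_add_le _ _).trans ?_
  rw [norm_smul, norm_smul, Real.norm_eq_abs, Real.norm_eq_abs, abs_inv, abs_of_pos hD0, abs_div,
    abs_of_pos (mul_pos hD0 hD'0), abs_sub_comm]
  calc D⁻¹ * ‖N - N'‖ + |D - D'| / (D * D') * ‖N'‖
      ≤ m⁻¹ * ‖N - N'‖ + |D - D'| / (m * m) * ‖N'‖ := by gcongr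
    _ = (‖N - N'‖ + |D - D'| / m * ‖N'‖) / m := by field_simp

section InnerProduct

variable {E : Type*} [NormedAddCommGroup E] [InnerProductSpace ℝ E]

theorem abs_inner_sub_inner_le (u u' v v' : E) :
    |⟪u, v⟫ - ⟪u', v'⟫| ≤ ‖u - u'‖ * ‖v‖ + ‖u'‖ * ‖v - v'‖ := by
  have split : ⟪u, v⟫ - ⟪u', v'⟫ = ⟪u - u', v⟫ + ⟪u', v - v'⟫ := by
    simp only [inner_sub_left, inner_sub_right]; ring
  rw [split]
  exact (abs_add_le _ _).trans
    (add_le_add (abs_real_inner_le_norm _ _) (abs_real_inner_le_norm _ _))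

theorem sq_norm_sub_le_inner {a b v : E} {ε : ℝ} (ha : ‖a - v‖ ≤ ε) (hb : ‖b - v‖ ≤ ε) :
    ‖v‖ ^ 2 - (2 * ‖v‖ + ε) * ε ≤ ⟪a, b⟫ := by
  have hb' : ‖b‖ ≤ ‖v‖ + ε := (norm_le_insert' b v).trans (by linarith)
  have close := (abs_sub_comm _ _).trans_le (abs_inner_sub_inner_le a v b v)
  rw [real_inner_self_eq_norm_sq] at close
  have h₁ : ‖a - v‖ * ‖b‖ ≤ ε * (‖v‖ + ε) := by gcongr; exact ha.trans' (norm_nonneg _)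
  have h₂ : ‖v‖ * ‖b - v‖ ≤ ‖v‖ * ε := by gcongr
  linarith [(le_abs_self _).trans close]

/-- `wedgeApply f g b = (f gᵀ - g fᵀ) b`. -/
def wedgeApply (f g b : E) : E :=
  ⟪g, b⟫ • f - ⟪f, b⟫ • g

theorem norm_wedgeApply_le (f g b : E) : ‖wedgeApply f g b‖ ≤ 2 * (‖f‖ * ‖g‖ * ‖b‖) := by
  have hg := abs_real_inner_le_norm g b
  have hf := abs_real_inner_le_norm f b
  calc ‖wedgeApply f g b‖ ≤ |⟪g, b⟫| * ‖f‖ + |⟪f, b⟫| * ‖g‖ := by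
        simpa only [wedgeApply, norm_smul, Real.norm_eq_abs] using
          norm_sub_le (⟪g, b⟫ • f) (⟪f, b⟫ • g)
    _ ≤ ‖g‖ * ‖b‖ * ‖f‖ + ‖f‖ * ‖b‖ * ‖g‖ := by gcongr
    _ = 2 * (‖f‖ * ‖g‖ * ‖b‖) := by ring

theorem wedgeApply_sub_wedgeApply (f f' g g' b b' : E) :
    wedgeApply f g b - wedgeApply f' g' b' =
      wedgeApply (f - f') g b + wedgeApply f' (g - g') b + wedgeApply f' g' (b - b') := by
  simp only [wedgeApply, inner_sub_left, inner_sub_right]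
  module

theorem norm_wedgeApply_sub_le (f f' g g' b b' : E) :
    ‖wedgeApply f g b - wedgeApply f' g' b'‖ ≤
      2 * (‖f - f'‖ * ‖g‖ * ‖b‖ + ‖f'‖ * ‖g - g'‖ * ‖b‖ + ‖f'‖ * ‖g'‖ * ‖b - b'‖) := by
  rw [wedgeApply_sub_wedgeApply]
  refine norm_add₃_le.trans ?_
  have := norm_wedgeApply_le (f - f') g b
  have := norm_wedgeApply_le f' (g - g') b
  have := norm_wedgeApply_le f' g' (b - b')
  linarith

theorem norm_inv_inner_smul_wedgeApply_sub_le {v : E} (hv : v ≠ 0) {C ℓ : ℝ} (hℓ : 0 ≤ ℓ)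
    {f f' g g' b b' p p' q q' : E} (hf : ‖f‖ ≤ C * ‖v‖) (hf' : ‖f'‖ ≤ C * ‖v‖)
    (hg : ‖g - v‖ ≤ ‖v‖ / 5) (hg' : ‖g' - v‖ ≤ ‖v‖ / 5)
    (hb : ‖b - v‖ ≤ ‖v‖ / 5) (hb' : ‖b' - v‖ ≤ ‖v‖ / 5)
    (hp : ‖p - v‖ ≤ ‖v‖ / 5) (hp' : ‖p' - v‖ ≤ ‖v‖ / 5)
    (hq : ‖q - v‖ ≤ ‖v‖ / 5) (hq' : ‖q' - v‖ ≤ ‖v‖ / 5)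
    (hff' : ‖f - f'‖ ≤ ℓ) (hgg' : ‖g - g'‖ ≤ ℓ) (hbb' : ‖b - b'‖ ≤ ℓ)
    (hpp' : ‖p - p'‖ ≤ ℓ) (hqq' : ‖q - q'‖ ≤ ℓ) :
    ‖⟪p, q⟫⁻¹ • wedgeApply f g b - ⟪p', q'⟫⁻¹ • wedgeApply f' g' b'‖ ≤ (36 * C + 6) * ℓ := by
  set n := ‖v‖
  have hn : 0 < n := norm_pos_iff.2 hv
  have hC : 0 ≤ C := nonneg_of_mul_nonneg_left ((norm_nonneg f).trans hf) hn
  have near : ∀ w : E, ‖w - v‖ ≤ n / 5 → ‖w‖ ≤ 6 / 5 * n := fun w hw ↦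
    (norm_le_insert' w v).trans (by linarith)
  have denom : ∀ {w w' : E}, ‖w - v‖ ≤ n / 5 → ‖w' - v‖ ≤ n / 5 → 14 / 25 * n ^ 2 ≤ ⟪w, w'⟫ :=
    fun hw hw' ↦ (sq_norm_sub_le_inner hw hw').trans' (by nlinarith)
  have hD : |⟪p, q⟫ - ⟪p', q'⟫| ≤ 12 / 5 * n * ℓ := by
    have := mul_le_mul hpp' (near q hq) (norm_nonneg _) hℓ
    have := mul_le_mul (near p' hp') hqq' (norm_nonneg _) (by positivity)
    linarith [abs_inner_sub_inner_le p p' q q']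
  have hN : ‖wedgeApply f g b - wedgeApply f' g' b'‖ ≤ (72 / 25 + 24 / 5 * C) * n ^ 2 * ℓ :=
    calc _ ≤ _ := norm_wedgeApply_sub_le f f' g g' b b'
      _ ≤ 2 * (ℓ * (6 / 5 * n) * (6 / 5 * n) + C * n * ℓ * (6 / 5 * n) +
            C * n * (6 / 5 * n) * ℓ) := by
        gcongr <;> first | assumption | exact near _ ‹_›
      _ = _ := by ring
  have hN' : ‖wedgeApply f' g' b'‖ ≤ 72 / 25 * C * n ^ 3 :=
    calc _ ≤ _ := norm_wedgeApply_le f' g' b'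
      _ ≤ 2 * (C * n * (6 / 5 * n) * (6 / 5 * n)) := by
        gcongr <;> first | assumption | exact near _ ‹_›
      _ = _ := by ring
  calc _ ≤ _ := norm_inv_smul_sub_inv_smul_le (by positivity) (denom hp hq) (denom hp' hq') _ _
    _ ≤ ((72 / 25 + 24 / 5 * C) * n ^ 2 * ℓ + 12 / 5 * n * ℓ / (14 / 25 * n ^ 2) *
          (72 / 25 * C * n ^ 3)) / (14 / 25 * n ^ 2) := by gcongr
    _ = (1500 / 49 * C + 36 / 7) * ℓ := by field_simp; ring
    _ ≤ (36 * C + 6) * ℓ := by gcongr <;> linarith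

end InnerProduct

section Consistency

variable {d : ℕ} {i t : EuclideanSpace ℝ (Fin d) → EuclideanSpace ℝ (Fin d)}
  {g : EuclideanSpace ℝ (Fin d) → EuclideanSpace ℝ (Fin d) → ℝ → EuclideanSpace ℝ (Fin d)}
  {x v w : EuclideanSpace ℝ (Fin d)} {R R' L H h : ℝ}

theorem inBall_self (hR : 0 ≤ R) : InBall i R x x := by
  simp only [InBall, sub_self, norm_zero]
  positivity

theorem InBall.mono (hR : 0 < R) (hRR' : R ≤ R') (hw : InBall i R' x w) : InBall i R x w :=
  hw.trans (div_le_div_of_nonneg_left (norm_nonneg _) hR hRR')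

theorem InBall.mul_norm_sub_le (hR : 0 < R) (hLR : L ≤ R) (hw : InBall i R x w) :
    L * ‖w - x‖ ≤ ‖i x‖ :=
  (mul_le_mul_of_nonneg_right hLR (norm_nonneg _)).trans ((le_div_iff₀' hR).1 hw)

theorem ConsistAt.norm_sub_le (hg : ConsistAt i t x R L H g) (hR : 0 ≤ R) (hh0 : 0 ≤ h)
    (hhH : h < H) (hv : InBall i R x v) (hw : InBall i R x w) :
    ‖g x v h - g x w h‖ ≤ L * ‖v - w‖ :=
  ((hg.2 h hh0 hhH).1 x v w (inBall_self hR) hv hw).2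

theorem ConsistAt.norm_sub_target_le (hg : ConsistAt i t x R L H g) (hR : 0 ≤ R) (hh0 : 0 ≤ h)
    (hhH : h < H) (hLh : 10 * L * h ≤ 1) (hw : InBall i R x w)
    (hLw : 10 * L * ‖w - x‖ ≤ ‖i x‖) : ‖g x w h - t x‖ ≤ ‖i x‖ / 5 := by
  have step := (hg.2 h hh0 hhH).2
  rw [hg.1] at step
  calc ‖g x w h - t x‖ ≤ ‖g x w h - g x x h‖ + ‖g x x h - t x‖ :=
        norm_sub_le_norm_sub_add_norm_sub _ _ _
    _ ≤ L * ‖w - x‖ + L * h * ‖i x‖ :=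
        add_le_add (hg.norm_sub_le hR hh0 hhH hw (inBall_self hR)) step
    _ ≤ ‖i x‖ / 5 := by nlinarith [norm_nonneg (i x)]

theorem consistAt_of_step_independent
    {ibar : EuclideanSpace ℝ (Fin d) → EuclideanSpace ℝ (Fin d) → EuclideanSpace ℝ (Fin d)}
    (hdiag : ibar x x = t x)
    (hlip : ∀ u v w, InBall i R x u → InBall i R x v → InBall i R x w →
      ‖ibar u v - ibar w v‖ ≤ L * ‖u - w‖ ∧ ‖ibar u v - ibar u w‖ ≤ L * ‖v - w‖)
    (hL : 0 ≤ L) : ConsistAt i t x R L H (fun u v _ ↦ ibar u v) :=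
  ⟨hdiag, fun h hh0 _ ↦ ⟨hlip, by rw [sub_self, norm_zero]; positivity⟩⟩

end Consistency

theorem Tmap_eq {d : ℕ}
    (ftil itil ihat ibrev :
      EuclideanSpace ℝ (Fin d) → EuclideanSpace ℝ (Fin d) → ℝ → EuclideanSpace ℝ (Fin d))
    (ibar : EuclideanSpace ℝ (Fin d) → EuclideanSpace ℝ (Fin d) → EuclideanSpace ℝ (Fin d))
    (x z : EuclideanSpace ℝ (Fin d)) (h : ℝ) :
    Tmap ftil itil ihat ibrev ibar x z h =
      x + h • (⟪ihat x z h, ibrev x z h⟫⁻¹ • wedgeApply (ftil x z h) (itil x z h) (ibar x z)) := by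
  rw [Tmap, wedgeApply, smul_smul, div_eq_mul_inv]

theorem discrete_gradient_Tmap_contraction_general {d : ℕ}
    (f : EuclideanSpace ℝ (Fin d) → EuclideanSpace ℝ (Fin d))
    (i : EuclideanSpace ℝ (Fin d) → EuclideanSpace ℝ (Fin d))
    (B : Set (EuclideanSpace ℝ (Fin d)))
    (C₁ : ℝ) (hC₁ : 0 < C₁) (hfC : ∀ x ∈ B, ‖f x‖ ≤ C₁ * ‖i x‖)
    (R L H : ℝ) (hR : 0 < R) (hL : 0 < L)
    (ftil itil ihat ibrev :
      EuclideanSpace ℝ (Fin d) → EuclideanSpace ℝ (Fin d) → ℝ → EuclideanSpace ℝ (Fin d))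
    (ibar : EuclideanSpace ℝ (Fin d) → EuclideanSpace ℝ (Fin d) → EuclideanSpace ℝ (Fin d))
    (hftil : ∀ x ∈ B, ConsistAt i f x R L H ftil)
    (hitil : ∀ x ∈ B, ConsistAt i i x R L H itil)
    (hihat : ∀ x ∈ B, ConsistAt i i x R L H ihat)
    (hibrev : ∀ x ∈ B, ConsistAt i i x R L H ibrev)
    (hibar_diag : ∀ x : EuclideanSpace ℝ (Fin d), ibar x x = i x)
    (hibar_lip : ∀ x ∈ B, ∀ u v w : EuclideanSpace ℝ (Fin d),
      InBall i R x u → InBall i R x v → InBall i R x w →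
      ‖ibar u v - ibar w v‖ ≤ L * ‖u - w‖ ∧ ‖ibar u v - ibar u w‖ ≤ L * ‖v - w‖)
    (R' H' : ℝ) (hR' : R' = max R (10 * L))
    (hH' : H' = min H (min (1 / (10 * L))
      (min (1 / (6 * (C₁ + 1/5) * R')) (1 / ((36 * (C₁ + 1/5) + 6) * L)))))
    (x : EuclideanSpace ℝ (Fin d)) (hxB : x ∈ B) (hix : i x ≠ 0)
    (h : ℝ) (hh0 : 0 ≤ h) (hhH : h < H')
    (z z' : EuclideanSpace ℝ (Fin d)) (hz : InBall i R' x z) (hz' : InBall i R' x z') :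
    ‖Tmap ftil itil ihat ibrev ibar x z h - Tmap ftil itil ihat ibrev ibar x z' h‖ ≤
        (36 * (C₁ + 1/5) + 6) * L * h * ‖z - z'‖ ∧
      (36 * (C₁ + 1/5) + 6) * L * h < 1 := by
  simp only [hH', lt_min_iff, lt_div_iff₀ (by positivity : (0 : ℝ) < 10 * L),
    lt_div_iff₀ (by positivity : (0 : ℝ) < (36 * (C₁ + 1/5) + 6) * L)] at hhH
  obtain ⟨hhH, hLh, -, hK⟩ := hhH
  refine ⟨?_, by linarith⟩
  have hRR' : R ≤ R' := hR' ▸ le_max_left _ _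
  have hLR' : 10 * L ≤ R' := hR' ▸ le_max_right _ _
  have hR'0 : 0 < R' := hR.trans_le hRR'
  have near : ∀ {t g}, ConsistAt i t x R L H g → ∀ {w}, InBall i R' x w →
      ‖g x w h - t x‖ ≤ ‖i x‖ / 5 := fun hg _ hw ↦
    hg.norm_sub_target_le hR.le hh0 hhH (by linarith) (hw.mono hR hRR')
      (hw.mul_norm_sub_le hR'0 hLR')
  have lip : ∀ {t g}, ConsistAt i t x R L H g → ‖g x z h - g x z' h‖ ≤ L * ‖z - z'‖ := fun hg ↦
    hg.norm_sub_le hR.le hh0 hhH (hz.mono hR hRR') (hz'.mono hR hRR')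
  have hf : ∀ {w}, InBall i R' x w → ‖ftil x w h‖ ≤ (C₁ + 1/5) * ‖i x‖ := fun {w} hw ↦ by
    linarith [norm_le_insert' (ftil x w h) (f x), near (hftil x hxB) hw, hfC x hxB]
  have hbar : ConsistAt i i x R L H (fun u v _ ↦ ibar u v) :=
    consistAt_of_step_independent (hibar_diag x) (hibar_lip x hxB) hL.le
  rw [Tmap_eq, Tmap_eq, add_sub_add_left_eq_sub, ← smul_sub, norm_smul, Real.norm_of_nonneg hh0]
  calc h * ‖_‖ ≤ h * ((36 * (C₁ + 1/5) + 6) * (L * ‖z - z'‖)) := by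
        gcongr
        -- `(· :)` keeps `g` from being found by higher-order unification against `ibar x z`
        exact norm_inv_inner_smul_wedgeApply_sub_le hix (by positivity) (hf hz) (hf hz')
          (near (hitil x hxB) hz) (near (hitil x hxB) hz') (near hbar hz :) (near hbar hz' :)
          (near (hihat x hxB) hz) (near (hihat x hxB) hz')
          (near (hibrev x hxB) hz) (near (hibrev x hxB) hz')
          (lip (hftil x hxB)) (lip (hitil x hxB)) (lip hbar :)
          (lip (hihat x hxB)) (lip (hibrev x hxB))
    _ = _ := by ring

/-- The contraction estimate `‖T z − T z′‖ ≤ (36C₂+6)Lh‖z − z′‖ < ‖z − z′‖`. -/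
theorem discrete_gradient_Tmap_contraction {d : ℕ}
    (f : EuclideanSpace ℝ (Fin d) → EuclideanSpace ℝ (Fin d))
    (I : EuclideanSpace ℝ (Fin d) → ℝ)
    (i : EuclideanSpace ℝ (Fin d) → EuclideanSpace ℝ (Fin d))
    (hgrad : ∀ x, HasGradientAt I (i x) x)
    (B : Set (EuclideanSpace ℝ (Fin d))) (hB : Bornology.IsBounded B)
    (C₁ : ℝ) (hC₁ : 0 < C₁) (hfC : ∀ x ∈ B, ‖f x‖ ≤ C₁ * ‖i x‖)
    (R L H : ℝ) (hR : 0 < R) (hL : 0 < L) (hH : 0 < H)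
    (ftil itil ihat ibrev :
      EuclideanSpace ℝ (Fin d) → EuclideanSpace ℝ (Fin d) → ℝ → EuclideanSpace ℝ (Fin d))
    (ibar : EuclideanSpace ℝ (Fin d) → EuclideanSpace ℝ (Fin d) → EuclideanSpace ℝ (Fin d))
    (hftil : ∀ x ∈ B, ConsistAt i f x R L H ftil)
    (hitil : ∀ x ∈ B, ConsistAt i i x R L H itil)
    (hihat : ∀ x ∈ B, ConsistAt i i x R L H ihat)
    (hibrev : ∀ x ∈ B, ConsistAt i i x R L H ibrev)
    (hibar_cont : Continuous (fun q : EuclideanSpace ℝ (Fin d) × EuclideanSpace ℝ (Fin d) =>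
      ibar q.1 q.2))
    (hibar_dg : ∀ x x' : EuclideanSpace ℝ (Fin d), ⟪ibar x x', x' - x⟫ = I x' - I x)
    (hibar_diag : ∀ x : EuclideanSpace ℝ (Fin d), ibar x x = i x)
    (hibar_lip : ∀ x ∈ B, ∀ u v w : EuclideanSpace ℝ (Fin d),
      InBall i R x u → InBall i R x v → InBall i R x w →
      ‖ibar u v - ibar w v‖ ≤ L * ‖u - w‖ ∧ ‖ibar u v - ibar u w‖ ≤ L * ‖v - w‖)
    (R' H' : ℝ) (hR' : R' = max R (10 * L))
    (hH' : H' = min H (min (1 / (10 * L))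
      (min (1 / (6 * (C₁ + 1/5) * R')) (1 / ((36 * (C₁ + 1/5) + 6) * L)))))
    (x : EuclideanSpace ℝ (Fin d)) (hxB : x ∈ B) (hix : i x ≠ 0)
    (h : ℝ) (hh0 : 0 ≤ h) (hhH : h < H')
    (z z' : EuclideanSpace ℝ (Fin d)) (hz : InBall i R' x z) (hz' : InBall i R' x z') :
    ‖Tmap ftil itil ihat ibrev ibar x z h - Tmap ftil itil ihat ibrev ibar x z' h‖ ≤
        (36 * (C₁ + 1/5) + 6) * L * h * ‖z - z'‖ ∧
      (36 * (C₁ + 1/5) + 6) * L * h < 1 :=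
  discrete_gradient_Tmap_contraction_general f i B C₁ hC₁ hfC R L H hR hL ftil itil ihat ibrev ibar
    hftil hitil hihat hibrev hibar_diag hibar_lip R' H' hR' hH' x hxB hix h hh0 hhH z z' hz hz'
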